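/- Let Y be a separable, non-compact metric space, let X be a Y-z-Tychonoff metrizable compact space, and let H be a subspace of Y^X (with the topology of pointwise convergence) containing B_1^{st}(X,Y). Then H is a normal space if and only if X is countable, and in that case H = Y^X. -/

import Mathlib

open Set Filter Topology TopologicalSpace

universe u v

/-- An ideal of compact sets in a topological space `X`. -/
structure IsCompactIdeal (X : Type u) [TopologicalSpace X] (I : Set (Set X)) : Prop where
  isCompact : ∀ A ∈ I, IsCompact A
  sUnion_eq : ⋃₀ I = Set.univ
  union_mem : ∀ A ∈ I, ∀ B ∈ I, A ∪ B ∈ I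
  inter_compact_mem : ∀ A ∈ I, ∀ K : Set X, IsCompact K → A ∩ K ∈ I

/-- `γ` is an `I`-cover of `X`. -/
def IsIdealCover {X : Type u} (I : Set (Set X)) (γ : Set (Set X)) : Prop :=
  ∀ A ∈ I, ∃ U ∈ γ, A ⊆ U

/-- `C` is an `I`-sequence in `X`. -/
def IsIdealSeq {X : Type u} (I : Set (Set X)) (C : ℕ → Set X) : Prop :=
  ∀ A ∈ I, ∃ m : ℕ, ∀ n ≥ m, A ⊆ C n

/-- The property `γ_I`: every open `I`-cover contains an `I`-sequence. -/
def GammaIdeal (X : Type u) [TopologicalSpace X] (I : Set (Set X)) : Prop :=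
  ∀ γ : Set (Set X), (∀ U ∈ γ, IsOpen U) → IsIdealCover I γ →
    ∃ C : ℕ → Set X, (∀ n, C n ∈ γ) ∧ IsIdealSeq I C

/-- `γ` is an ω-cover of `X`: every finite set is contained in a member. -/
def IsOmegaCover {X : Type u} (γ : Set (Set X)) : Prop :=
  ∀ F : Set X, F.Finite → ∃ U ∈ γ, F ⊆ U

/-- The property `γ`: every open ω-cover contains a sequence in which every point
eventually lies. -/
def GammaP (X : Type u) [TopologicalSpace X] : Prop :=
  ∀ γ : Set (Set X), (∀ U ∈ γ, IsOpen U) → IsOmegaCover γ →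
    ∃ C : ℕ → Set X, (∀ n, C n ∈ γ) ∧ ∀ x : X, ∃ m : ℕ, ∀ n ≥ m, x ∈ C n

/-- The property `φ`. -/
def PhiP (X : Type u) [TopologicalSpace X] : Prop :=
  ∀ η : ℕ → Set (Set X),
    (∀ n, ∀ U ∈ η n, IsOpen U) →
    (∀ n, ∀ U ∈ η n, ∃ V ∈ η (n + 1), U ⊆ V) →
    IsOmegaCover (⋃ n, η n) →
    ∃ C : ℕ → Set X, (∀ x : X, ∃ m : ℕ, ∀ n ≥ m, x ∈ C n) ∧
      ∀ n, ∀ F : Set X, F.Finite → F ⊆ C n → ∃ U ∈ η n, F ⊆ U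

/-- The property `φ_I`. -/
def PhiIdeal (X : Type u) [TopologicalSpace X] (I : Set (Set X)) : Prop :=
  ∀ η : ℕ → Set (Set X),
    (∀ n, ∀ U ∈ η n, IsOpen U) →
    (∀ n, ∀ U ∈ η n, ∃ V ∈ η (n + 1), U ⊆ V) →
    IsIdealCover I (⋃ n, η n) →
    ∃ C : ℕ → Set X, IsIdealSeq I C ∧
      ∀ n, ∀ A ∈ I, A ⊆ C n → ∃ U ∈ η n, A ⊆ U

/-- The `I`-open topology on `Y^X`, generated by the sets `[K;U] = {f | f(K) ⊆ U}`
for `K ∈ I` and `U ⊆ Y` open. -/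
def idealOpenTopology {X : Type u} [TopologicalSpace X] (I : Set (Set X))
    (Y : Type v) [TopologicalSpace Y] : TopologicalSpace (X → Y) :=
  TopologicalSpace.generateFrom
    {S : Set (X → Y) | ∃ K ∈ I, ∃ U : Set Y, IsOpen U ∧ S = {f : X → Y | Set.MapsTo f K U}}

/-- Type synonym for `X → Y` carrying the `I`-open topology. -/
def IdealFn (X : Type u) (Y : Type v) [TopologicalSpace X] [TopologicalSpace Y]
    (I : Set (Set X)) : Type (max u v) := X → Y

instance IdealFn.instTopologicalSpace {X : Type u} {Y : Type v} [TopologicalSpace X]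
    [TopologicalSpace Y] (I : Set (Set X)) : TopologicalSpace (IdealFn X Y I) :=
  idealOpenTopology I Y

/-- `X` is `Y_I`-Tychonoff. -/
def IdealYTychonoff (X : Type u) (Y : Type v) [TopologicalSpace X] [TopologicalSpace Y]
    (I : Set (Set X)) : Prop :=
  ∀ A : Set X, IsClosed A → ∀ y₀ : Y, ∀ F ∈ I, F ⊆ Aᶜ →
    ∀ f : F → Y, Continuous f → (Set.range f).Finite →
      ∃ g : X → Y, Continuous g ∧ (∀ x : F, g x.1 = f x) ∧ g '' A ⊆ {y₀}

/-- `X` is `Y`-Tychonoff (the case of the ideal of finite sets, with arbitrary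
functions on finite sets). -/
def YTychonoff (X : Type u) (Y : Type v) [TopologicalSpace X] [TopologicalSpace Y] : Prop :=
  ∀ A : Set X, IsClosed A → ∀ y₀ : Y, ∀ F : Set X, F.Finite → F ⊆ Aᶜ →
    ∀ f : F → Y, ∃ g : X → Y, Continuous g ∧ (∀ x : F, g x.1 = f x) ∧ g '' A ⊆ {y₀}

/-- `H` is a relatively `D_I`-Tychonoff subspace of `S ⊆ Y^X`. -/
def RelTychonoffSub {X : Type u} {Y : Type v} [TopologicalSpace X]
    (I : Set (Set X)) (D : Set Y) (H S : Set (X → Y)) : Prop :=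
  ∀ A : Set X, IsClosed A → ∀ F ∈ I, F ⊆ Aᶜ → ∀ y₀ ∈ D, ∀ f ∈ S,
    (f '' F).Finite → f '' F ⊆ D →
      ∃ g ∈ H, Set.EqOn g f F ∧ g '' A ⊆ {y₀}

/-- `Z` is a k-space: for every non-closed `A ⊆ Z` there is a compact `K` such that
`A ∩ K` is not closed in `K`. -/
def IsKSpace (Z : Type u) [TopologicalSpace Z] : Prop :=
  ∀ A : Set Z, ¬ IsClosed A → ∃ K : Set Z, IsCompact K ∧
    ¬ IsClosed (Subtype.val ⁻¹' A : Set K)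

/-- `Z` has countable tightness. -/
def HasCountableTightness (Z : Type u) [TopologicalSpace Z] : Prop :=
  ∀ (A : Set Z) (z : Z), z ∈ closure A → ∃ B ⊆ A, B.Countable ∧ z ∈ closure B

/-- `⋃_n ⋂_{i ≥ n} U i`, the set of points eventually in all `U i`. -/
def seqLimInf {X : Type u} (U : ℕ → Set X) : Set X :=
  ⋃ n, ⋂ i, ⋂ (_ : n ≤ i), U i

/-- A zero-set in `X`. -/
def IsZeroSet {X : Type u} [TopologicalSpace X] (F : Set X) : Prop :=
  ∃ f : X → ℝ, Continuous f ∧ F = f ⁻¹' {0}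

/-- The Baire topology on `X`, with the zero-sets as a base. -/
def baireTopology (X : Type u) [TopologicalSpace X] : TopologicalSpace X :=
  TopologicalSpace.generateFrom {F : Set X | IsZeroSet F}

/-- `X` is `Y`-z-Tychonoff. -/
def YzTychonoff (X : Type u) (Y : Type v) [TopologicalSpace X] [TopologicalSpace Y] : Prop :=
  (T1Space X ∧ CompletelyRegularSpace X) ∧
  ∀ A : Set X, IsClosed A → ∀ n : ℕ, ∀ F : Fin n → Set X,
    (∀ i, IsZeroSet (F i)) → (∀ i j, i ≠ j → Disjoint (F i) (F j)) →
    (⋃ i, F i) ⊆ Aᶜ → ∀ y₀ : Y, ∀ y : Fin n → Y,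
      ∃ f : X → Y, Continuous f ∧ f '' A ⊆ {y₀} ∧ ∀ i, f '' (F i) ⊆ {y i}

/-- `X` is `Y`-normal. -/
def YNormal (X : Type u) (Y : Type v) [TopologicalSpace X] [TopologicalSpace Y] : Prop :=
  T1Space X ∧
  ∀ F : Set X, IsClosed F → ∀ f : F → Y, Continuous f → (Set.range f).Finite →
    ∃ g : X → Y, Continuous g ∧ ∀ x : F, g x.1 = f x

/-- `X` is `Y`-z-normal. -/
def YzNormal (X : Type u) (Y : Type v) [TopologicalSpace X] [TopologicalSpace Y] : Prop :=
  (T1Space X ∧ CompletelyRegularSpace X) ∧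
  ∀ F : Set X, IsZeroSet F → ∀ f : F → Y, Continuous f → (Set.range f).Finite →
    ∃ g : X → Y, Continuous g ∧ ∀ x : F, g x.1 = f x

/-- `f n` stably converges to `g`. -/
def StablyConvergesTo {X : Type u} {Y : Type v} (f : ℕ → X → Y) (g : X → Y) : Prop :=
  ∀ x : X, {n : ℕ | f n x ≠ g x}.Finite

/-- The stable Baire class one functions `B₁ˢᵗ(X,Y)`. -/
def BaireOneStable (X : Type u) (Y : Type v) [TopologicalSpace X] [TopologicalSpace Y] :
    Set (X → Y) :=
  {g | ∃ f : ℕ → X → Y, (∀ n, Continuous (f n)) ∧ StablyConvergesTo f g}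

/-- The Baire class one functions `B₁(X,Y)`, pointwise limits of sequences of
continuous functions. -/
def BaireOne (X : Type u) (Y : Type v) [TopologicalSpace X] [TopologicalSpace Y] :
    Set (X → Y) :=
  {g | ∃ f : ℕ → X → Y, (∀ n, Continuous (f n)) ∧
    ∀ x : X, Filter.Tendsto (fun n => f n x) Filter.atTop (nhds (g x))}

/-- The Baire functions `B(X,Y) = ⋃_{α<ω₁} B_α(X,Y)`: the smallest family containing
the continuous functions and closed under pointwise limits of sequences. -/
inductive IsBaireFun (X : Type u) (Y : Type v) [TopologicalSpace X] [TopologicalSpace Y] :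
    (X → Y) → Prop
  | cont (f : X → Y) : Continuous f → IsBaireFun X Y f
  | limit (f : ℕ → X → Y) (g : X → Y) : (∀ n, IsBaireFun X Y (f n)) →
      (∀ x : X, Filter.Tendsto (fun n => f n x) Filter.atTop (nhds (g x))) →
      IsBaireFun X Y g

/-- `Z` is scattered: every nonempty subset has an isolated point. -/
def IsScatteredSpace (Z : Type u) [TopologicalSpace Z] : Prop :=
  ∀ S : Set Z, S.Nonempty → ∃ x ∈ S, ∃ U : Set Z, IsOpen U ∧ U ∩ S = {x}

/-- The subspace `K` of `X` is scattered. -/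
def IsScatteredSubset {X : Type u} [TopologicalSpace X] (K : Set X) : Prop :=
  ∀ S : Set X, S ⊆ K → S.Nonempty → ∃ x ∈ S, ∃ U : Set X, IsOpen U ∧ U ∩ S = {x}

/-- The tightness `t(Z)`: the least infinite cardinal `κ` such that whenever
`z ∈ closure A` there is `B ⊆ A` with `#B ≤ κ` and `z ∈ closure B`. -/
noncomputable def tightnessCard (Z : Type u) [TopologicalSpace Z] : Cardinal.{u} :=
  sInf {κ : Cardinal.{u} | Cardinal.aleph0 ≤ κ ∧ ∀ (A : Set Z) (z : Z), z ∈ closure A →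
    ∃ B : Set Z, B ⊆ A ∧ Cardinal.mk B ≤ κ ∧ z ∈ closure B}

/-- The `I`-Lindelöf degree of `X`: the least infinite cardinal `κ` such that every
open `I`-cover has an `I`-subcover of cardinality `≤ κ`. -/
noncomputable def idealLindelofDeg (X : Type u) [TopologicalSpace X] (I : Set (Set X)) :
    Cardinal.{u} :=
  sInf {κ : Cardinal.{u} | Cardinal.aleph0 ≤ κ ∧ ∀ γ : Set (Set X), (∀ U ∈ γ, IsOpen U) →
    IsIdealCover I γ → ∃ γ' : Set (Set X), γ' ⊆ γ ∧ Cardinal.mk γ' ≤ κ ∧ IsIdealCover I γ'}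


/-! If `X` is countable, every `f : X → Y` is the stable limit of continuous maps interpolating
`f` on an increasing sequence of finite sets exhausting `X`, so `H = Y^X`, which is metrizable.

If `X` is uncountable, it contains a Cantor set `ψ : 2^ℕ → X`. Choose an injective sequence `y`
in `Y` without accumulation points (it exists as `Y` is not compact). For `x ∈ 2^ℕ` let `F_x` send
`ψ w` to `y (n + 1)`, where `n` is the first index at which `w` and `x` differ, and everything
else (including `ψ x`) to `y 0`. Each `F_x` is a stable limit of continuous maps, the `F_x` are
pairwise distinct, and by compactness of `2^ℕ` every point of `Y^X` has a neighbourhood containing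
at most one `F_x`. So `H` has a closed discrete subset of size `𝔠`. But `H` is separable, since
it contains the continuous maps, which are dense in `Y^X` and separable in the compact-open
topology; and by Jones' lemma a separable normal space has no closed discrete subset of size `𝔠`.
-/

open Function PiNat

theorem IsClosed.isZeroSet {X : Type*} [PseudoMetricSpace X] {s : Set X} (hs : IsClosed s) :
    IsZeroSet s := by
  rcases s.eq_empty_or_nonempty with rfl | hne
  · exact ⟨fun _ => 1, continuous_const, by simp⟩
  · refine ⟨(Metric.infDist · s), Metric.continuous_infDist_pt s, ?_⟩
    ext p
    exact hs.mem_iff_infDist_zero hne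

theorem stablyConvergesTo_iff_eventually_eq {X Y : Type*} {f : ℕ → X → Y} {g : X → Y} :
    StablyConvergesTo f g ↔ ∀ x, ∀ᶠ n in atTop, f n x = g x := by
  simp only [StablyConvergesTo, ← Nat.cofinite_eq_atTop, eventually_cofinite, ne_eq]

theorem Continuous.mem_baireOneStable {X Y : Type*} [TopologicalSpace X] [TopologicalSpace Y]
    {f : X → Y} (hf : Continuous f) : f ∈ BaireOneStable X Y :=
  ⟨fun _ => f, fun _ => hf, stablyConvergesTo_iff_eventually_eq.2 fun _ => .of_forall fun _ => rfl⟩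

namespace YzTychonoff

variable {X Y : Type*} [MetricSpace X] [TopologicalSpace Y]

theorem exists_continuous_eqOn_const (hX : YzTychonoff X Y) {ι : Type*} [Finite ι]
    {A : Set X} (hA : IsClosed A) {F : ι → Set X} (hF : ∀ i, IsClosed (F i))
    (hdisj : Pairwise (Disjoint on F)) (hFA : ∀ i, Disjoint (F i) A) (y₀ : Y) (y : ι → Y) :
    ∃ g : X → Y, Continuous g ∧ (∀ p ∈ A, g p = y₀) ∧ ∀ i, ∀ p ∈ F i, g p = y i := by
  let e := Finite.equivFin ι
  obtain ⟨g, hgc, hgA, hgF⟩ := hX.2 A hA _ (F ∘ e.symm) (fun i => (hF _).isZeroSet)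
    (fun i j hij => hdisj (e.symm.injective.ne hij))
    (iUnion_subset fun i => (hFA _).subset_compl_right) y₀ (y ∘ e.symm)
  refine ⟨g, hgc, fun p hp => hgA (mem_image_of_mem g hp), fun i p hp => ?_⟩
  simpa using hgF (e i) (mem_image_of_mem g (by simpa using hp))

theorem exists_continuous_eqOn (hX : YzTychonoff X Y) {s : Set X} (hs : s.Finite) (f : X → Y) :
    ∃ g : X → Y, Continuous g ∧ EqOn g f s := by
  cases isEmpty_or_nonempty X with
  | inl _ => exact ⟨f, continuous_of_discreteTopology, fun x => isEmptyElim x⟩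
  | inr hne =>
    have := hs.to_subtype
    obtain ⟨g, hgc, -, hgs⟩ := hX.exists_continuous_eqOn_const isClosed_empty
      (F := fun p : s => {p.1}) (fun _ => isClosed_singleton)
      (fun p q hpq => disjoint_singleton.2 (Subtype.val_injective.ne hpq))
      (fun _ => disjoint_empty _) (f hne.some) (fun p => f p)
    exact ⟨g, hgc, fun p hp => hgs ⟨p, hp⟩ p rfl⟩

theorem dense_setOf_continuous (hX : YzTychonoff X Y) : Dense {g : X → Y | Continuous g} := by
  refine dense_iff_inter_open.2 fun U hU ⟨f, hfU⟩ => ?_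
  obtain ⟨I, u, hu, hIu⟩ := isOpen_pi_iff.1 hU f hfU
  obtain ⟨g, hgc, hgf⟩ := hX.exists_continuous_eqOn I.finite_toSet f
  exact ⟨g, hIu fun i hi => hgf hi ▸ (hu i hi).2, hgc⟩

theorem baireOneStable_eq_univ [Countable X] (hX : YzTychonoff X Y) :
    BaireOneStable X Y = univ := by
  refine eq_univ_of_forall fun f => ?_
  obtain ⟨e, he⟩ := Countable.exists_injective_nat X
  choose g hgc hgf using fun n =>
    hX.exists_continuous_eqOn ((finite_Iio n).preimage he.injOn) f
  refine ⟨g, hgc, stablyConvergesTo_iff_eventually_eq.2 fun x => ?_⟩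
  filter_upwards [eventually_gt_atTop (e x)] with n hn using hgf n hn

end YzTychonoff

theorem isClosed_of_subset_of_forall_nhds_subsingleton {Z : Type*} [TopologicalSpace Z]
    [T1Space Z] {s t : Set Z} (hs : ∀ z, ∃ U ∈ 𝓝 z, (U ∩ s).Subsingleton) (ht : t ⊆ s) :
    IsClosed t := by
  have hfin : LocallyFinite fun w : t => ({w.1} : Set Z) := fun z => by
    obtain ⟨U, hU, hUs⟩ := hs z
    refine ⟨U, hU, Set.Subsingleton.finite fun v hv w hw => Subtype.ext ?_⟩
    obtain ⟨_, rfl, hvU⟩ := hv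
    obtain ⟨_, rfl, hwU⟩ := hw
    exact hUs ⟨hvU, ht v.2⟩ ⟨hwU, ht w.2⟩
  simpa using hfin.isClosed_iUnion fun _ => isClosed_singleton

open Cardinal in
theorem mk_lt_continuum_of_forall_subset_isClosed {Z : Type*} [TopologicalSpace Z]
    [NormalSpace Z] [SeparableSpace Z] {s : Set Z} (hs : ∀ t ⊆ s, IsClosed t) : #s < 𝔠 := by
  obtain ⟨D, hDc, hDd⟩ := exists_countable_dense Z
  have hsep (T : Set s) : SeparatedNhds (Subtype.val '' T) (Subtype.val '' Tᶜ) :=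
    normal_separation (hs _ (by simp)) (hs _ (by simp))
      (disjoint_image_of_injective Subtype.val_injective disjoint_compl_right)
  choose U V hU hV hTU hTV hUV using hsep
  -- a point of `T₁ \ T₂` puts a point of `D` into `U T₁ ∩ V T₂`, hence into `U T₁ \ U T₂`
  have hθ : Injective fun T : Set s => {d : D | d.1 ∈ U T} := by
    have hsub (T₁ T₂ : Set s) (h : {d : D | d.1 ∈ U T₁} = {d : D | d.1 ∈ U T₂}) : T₁ ⊆ T₂ := by
      intro x hx₁
      by_contra hx₂
      obtain ⟨d, ⟨hdU, hdV⟩, hdD⟩ := hDd.inter_open_nonempty _ ((hU T₁).inter (hV T₂))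
        ⟨x, hTU T₁ (mem_image_of_mem _ hx₁), hTV T₂ (mem_image_of_mem _ hx₂)⟩
      have : (⟨d, hdD⟩ : D) ∈ {d : D | d.1 ∈ U T₂} := h ▸ hdU
      exact disjoint_left.1 (hUV T₂) this hdV
    exact fun T₁ T₂ h => (hsub T₁ T₂ h).antisymm (hsub T₂ T₁ h.symm)
  calc #s < 2 ^ #s := cantor _
    _ = #(Set s) := mk_set.symm
    _ ≤ #(Set D) := mk_le_of_injective hθ
    _ = 2 ^ #D := mk_set
    _ ≤ 2 ^ ℵ₀ := power_le_power_left two_ne_zero (mk_le_aleph0_iff.2 hDc.to_subtype)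
    _ = 𝔠 := two_power_aleph0

theorem separableSpace_of_setOf_continuous_subset {X Y : Type*} [TopologicalSpace X]
    [SecondCountableTopology X] [LocallyCompactSpace X] [TopologicalSpace Y]
    [SecondCountableTopology Y] (hdense : Dense {g : X → Y | Continuous g}) {H : Set (X → Y)}
    (hH : {g : X → Y | Continuous g} ⊆ H) : SeparableSpace H := by
  let φ : C(X, Y) → H := fun g => ⟨g, hH g.continuous⟩
  have hφ : Continuous φ := continuous_induced_rng.2 continuous_coeFun
  refine DenseRange.separableSpace (Subtype.dense_iff.2 ?_) hφ
  have : Subtype.val '' range φ = {g : X → Y | Continuous g} := by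
    ext g
    exact ⟨by rintro ⟨_, ⟨g, rfl⟩, rfl⟩; exact g.continuous, fun hg => ⟨_, ⟨⟨g, hg⟩, rfl⟩, rfl⟩⟩
  rw [this, hdense.closure_eq]
  exact subset_univ _

theorem exists_injective_nat_isolated_of_not_countablyCompactSpace {Y : Type*}
    [TopologicalSpace Y] [T1Space Y] (h : ¬ CountablyCompactSpace Y) :
    ∃ y : ℕ → Y, Injective y ∧ ∀ p, ∃ U ∈ 𝓝 p, ∀ n, y n ∈ U → y n = p := by
  rw [← isCountablyCompact_univ_iff, isCountablyCompact_iff_infinite_subset_has_accPt] at h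
  push Not at h
  obtain ⟨B, -, hB, hacc⟩ := h
  set e := hB.natEmbedding
  refine ⟨(↑) ∘ e, Subtype.val_injective.comp e.injective, fun p => ?_⟩
  have := hacc p (mem_univ p)
  simp only [accPt_iff_nhds, not_forall, not_exists, not_and, not_not] at this
  obtain ⟨U, hU, hUB⟩ := this
  exact ⟨U, hU, fun n hn => hUB _ ⟨hn, (e n).2⟩⟩

theorem PiNat.isClosed_cylinder {E : ℕ → Type*} [∀ n, TopologicalSpace (E n)]
    [∀ n, T1Space (E n)] (x : ∀ n, E n) (n : ℕ) : IsClosed (cylinder x n) := by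
  rw [cylinder_eq_pi]
  exact isClosed_set_pi fun _ _ => isClosed_singleton

-- `y (cantorIndex x w)` is `y 0` at `w = x` and runs off along `y` as `w → x`.
noncomputable def cantorIndex (x w : ℕ → Bool) : ℕ :=
  open scoped Classical in if w = x then 0 else firstDiff x w + 1

theorem cantorIndex_comm (x w : ℕ → Bool) : cantorIndex x w = cantorIndex w x := by
  by_cases h : w = x
  · rw [h]
  · simp only [cantorIndex, if_neg h, if_neg (Ne.symm h), firstDiff_comm x w]

@[simp]
theorem cantorIndex_eq_zero {x w : ℕ → Bool} : cantorIndex x w = 0 ↔ w = x := by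
  unfold cantorIndex
  split_ifs <;> simp_all

@[simp]
theorem cantorIndex_self (x : ℕ → Bool) : cantorIndex x x = 0 :=
  cantorIndex_eq_zero.2 rfl

theorem lt_cantorIndex_of_mem_cylinder {x w : ℕ → Bool} {n : ℕ} (hw : w ∈ cylinder x n)
    (hne : w ≠ x) : n < cantorIndex x w := by
  rw [cantorIndex, if_neg hne, Nat.lt_succ_iff, firstDiff_comm]
  exact (mem_cylinder_iff_le_firstDiff hne n).1 hw

theorem setOf_cantorIndex_eq_succ (x : ℕ → Bool) (k : ℕ) :
    {w | cantorIndex x w = k + 1} = cylinder x k \ cylinder x (k + 1) := by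
  ext w
  by_cases hw : w = x
  · simp [hw]
  · simp only [mem_ofPred_eq, cantorIndex, if_neg hw, Nat.add_right_cancel_iff, Set.mem_sdiff,
      firstDiff_comm x w, mem_cylinder_iff_le_firstDiff hw]
    omega

theorem isClosed_setOf_cantorIndex_eq (x : ℕ → Bool) (n : ℕ) :
    IsClosed {w | cantorIndex x w = n} := by
  cases n with
  | zero => simp
  | succ k =>
    rw [setOf_cantorIndex_eq_succ]
    exact (isClosed_cylinder x k).sdiff (isOpen_cylinder _ x (k + 1))

theorem exists_finset_biInter_cantorIndex_subsingleton {Y : Type*} {y : ℕ → Y} (hy : Injective y)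
    (c : (ℕ → Bool) → Y) :
    ∃ t : Finset (ℕ → Bool), (⋂ z ∈ t, {x | y (cantorIndex x z) = c z}).Subsingleton := by
  by_cases h0 : ∃ z, c z = y 0
  · obtain ⟨z, hz⟩ := h0
    refine ⟨{z}, (subsingleton_singleton (a := z)).anti fun x hx => ?_⟩
    simp only [Finset.mem_singleton, iInter_iInter_eq_left, mem_ofPred_eq, hz] at hx
    exact (cantorIndex_eq_zero.1 (hy hx)).symm
  · -- no `x` lies in its own set, so compactness of the Cantor space gives a finite subfamily
    -- with empty intersection
    have hclosed (z : ℕ → Bool) : IsClosed {x | y (cantorIndex x z) = c z} := by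
      have : {x | y (cantorIndex x z) = c z} = ⋃ n ∈ y ⁻¹' {c z}, {x | cantorIndex z x = n} := by
        ext x
        simp [cantorIndex_comm z x]
      rw [this]
      exact ((subsingleton_singleton.preimage hy).finite).isClosed_biUnion
        fun n _ => isClosed_setOf_cantorIndex_eq z n
    have hempty : univ ∩ ⋂ z, {x | y (cantorIndex x z) = c z} = ∅ :=
      eq_empty_iff_forall_notMem.2 fun x ⟨_, hx⟩ =>
        h0 ⟨x, by simpa using (mem_iInter.1 hx x).symm⟩
    obtain ⟨t, ht⟩ := isCompact_univ.elim_finite_subfamily_closed _ hclosed hempty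
    refine ⟨t, ?_⟩
    rw [univ_inter] at ht
    exact ht ▸ subsingleton_empty

section CantorFamily

variable {X Y : Type*} {ψ : (ℕ → Bool) → X} {y : ℕ → Y}

noncomputable def cantorFamily (ψ : (ℕ → Bool) → X) (y : ℕ → Y) (x : ℕ → Bool) : X → Y :=
  extend ψ (fun w => y (cantorIndex x w)) fun _ => y 0

theorem cantorFamily_apply_apply (hψ : Injective ψ) (x w : ℕ → Bool) :
    cantorFamily ψ y x (ψ w) = y (cantorIndex x w) :=
  hψ.extend_apply _ _ _

theorem cantorFamily_apply_of_notMem_range (x : ℕ → Bool) {p : X} (hp : p ∉ range ψ) :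
    cantorFamily ψ y x p = y 0 :=
  extend_apply' _ _ _ fun ⟨w, hw⟩ => hp ⟨w, hw⟩

theorem cantorFamily_injective (hψ : Injective ψ) (hy : Injective y) :
    Injective (cantorFamily ψ y) := fun x x' h => by
  have := congrFun h (ψ x')
  rw [cantorFamily_apply_apply hψ, cantorFamily_apply_apply hψ, cantorIndex_self] at this
  exact (cantorIndex_eq_zero.1 (hy this)).symm

theorem exists_mem_nhds_setOf_cantorFamily_mem_subsingleton [TopologicalSpace Y]
    (hψ : Injective ψ) (hy : Injective y) (hyU : ∀ p, ∃ U ∈ 𝓝 p, ∀ n, y n ∈ U → y n = p)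
    (G : X → Y) : ∃ W ∈ 𝓝 G, {x | cantorFamily ψ y x ∈ W}.Subsingleton := by
  choose U hU hUy using hyU
  obtain ⟨t, ht⟩ := exists_finset_biInter_cantorIndex_subsingleton hy (G ∘ ψ)
  refine ⟨⋂ z ∈ t, (· (ψ z)) ⁻¹' U (G (ψ z)),
    (biInter_finset_mem t).2 fun z _ => (continuous_apply _).continuousAt.preimage_mem_nhds
      (hU _), ht.anti fun x hx => ?_⟩
  simp only [mem_iInter, mem_preimage, mem_ofPred_eq, cantorFamily_apply_apply hψ] at hx ⊢
  exact fun z hz => hUy _ _ (hx z hz)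

theorem exists_continuous_cantorFamily_approx [MetricSpace X] [TopologicalSpace Y]
    (hX : YzTychonoff X Y) (hψc : Continuous ψ) (hψ : Injective ψ) (x : ℕ → Bool) (n : ℕ) :
    ∃ g : X → Y, Continuous g ∧
      (∀ p ∈ ψ '' cylinder x n ∪ (Metric.thickening (1 / (n + 1)) (range ψ))ᶜ, g p = y 0) ∧
      ∀ j < n, ∀ w, cantorIndex x w = j + 1 → g (ψ w) = y (j + 1) := by
  have hclosed {s : Set (ℕ → Bool)} (hs : IsClosed s) : IsClosed (ψ '' s) :=
    (hs.isCompact.image hψc).isClosed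
  obtain ⟨g, hgc, hgA, hgL⟩ := hX.exists_continuous_eqOn_const
    ((hclosed (isClosed_cylinder x n)).union Metric.isOpen_thickening.isClosed_compl)
    (F := fun j : Fin n => ψ '' {w | cantorIndex x w = j + 1})
    (fun j => hclosed (isClosed_setOf_cantorIndex_eq x _))
    (fun i j hij => (disjoint_image_iff hψ).2 <| disjoint_left.2 fun w hi hj =>
      hij (Fin.ext (by simp_all)))
    (fun j => by
      refine disjoint_union_right.2 ⟨(disjoint_image_iff hψ).2 <| disjoint_left.2 ?_, ?_⟩
      · rintro w hw hwx
        have := lt_cantorIndex_of_mem_cylinder hwx (by rintro rfl; simp at hw)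
        simp only [mem_ofPred_eq] at hw
        omega
      · exact disjoint_compl_right.mono_left <| (image_subset_range _ _).trans
          (Metric.self_subset_thickening (Nat.one_div_pos_of_nat (n := n)) _))
    (y 0) fun j => y (j + 1)
  exact ⟨g, hgc, hgA, fun j hj w hw => hgL ⟨j, hj⟩ _ (mem_image_of_mem _ hw)⟩

theorem cantorFamily_mem_baireOneStable [MetricSpace X] [TopologicalSpace Y]
    (hX : YzTychonoff X Y) (hψc : Continuous ψ) (hψ : Injective ψ) (x : ℕ → Bool) :
    cantorFamily ψ y x ∈ BaireOneStable X Y := by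
  choose g hgc hgA hgL using exists_continuous_cantorFamily_approx (y := y) hX hψc hψ x
  refine ⟨g, hgc, stablyConvergesTo_iff_eventually_eq.2 fun p => ?_⟩
  by_cases hp : p ∈ range ψ
  · obtain ⟨w, rfl⟩ := hp
    rw [cantorFamily_apply_apply hψ]
    by_cases hw : w = x
    · subst hw
      exact .of_forall fun n => by
        simpa using hgA n _ (.inl (mem_image_of_mem _ (self_mem_cylinder w n)))
    · obtain ⟨j, hj⟩ := Nat.exists_eq_succ_of_ne_zero (mt cantorIndex_eq_zero.1 hw)
      filter_upwards [eventually_gt_atTop j] with n hn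
      rw [hj, hgL n j hn w hj]
  · rw [cantorFamily_apply_of_notMem_range x hp]
    obtain ⟨δ, hδ, hpδ⟩ : ∃ δ > 0, p ∉ Metric.thickening δ (range ψ) := by
      have := (isCompact_range hψc).isClosed.closure_eq ▸ hp
      simpa [Metric.closure_eq_iInter_thickening] using this
    filter_upwards [tendsto_one_div_add_atTop_nhds_zero_nat.eventually (gt_mem_nhds hδ)] with n hn
    exact hgA n p (.inr fun h => hpδ (Metric.thickening_mono hn.le _ h))

end CantorFamily

/-- Let `Y` be a separable non-compact metric space, `X` a
`Y`-z-Tychonoff metrizable compact space, and `H ⊆ Y^X` (pointwise topology)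
containing `B₁ˢᵗ(X,Y)`. Then `H` is normal iff `X` is countable, in which case
`H = Y^X`. -/
theorem baire_stable_normal_iff_countable {X : Type u} {Y : Type v}
    [TopologicalSpace X] [MetricSpace Y] [TopologicalSpace.SeparableSpace Y]
    (hYnc : ¬ CompactSpace Y)
    [TopologicalSpace.MetrizableSpace X] [CompactSpace X]
    (hXT : YzTychonoff X Y)
    (H : Set (X → Y)) (hH : BaireOneStable X Y ⊆ H) :
    ((T1Space ↥H ∧ NormalSpace ↥H) ↔ Countable X) ∧
    (Countable X → H = Set.univ) := by
  let := metrizableSpaceMetric X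
  have hcont : {g : X → Y | Continuous g} ⊆ H := fun g hg => hH hg.mem_baireOneStable
  have hcount : Countable X → H = univ := fun _ =>
    eq_univ_of_univ_subset (hXT.baireOneStable_eq_univ ▸ hH)
  refine ⟨⟨fun ⟨_, _⟩ => ?_, fun _ => ?_⟩, hcount⟩
  · by_contra hX
    obtain ⟨ψ, -, hψc, hψ⟩ := isClosed_univ.exists_nat_bool_injection_of_not_countable
      (countable_univ_iff.not.2 hX)
    obtain ⟨y, hy, hyU⟩ := exists_injective_nat_isolated_of_not_countablyCompactSpace
      fun (_ : CountablyCompactSpace Y) => hYnc LindelofSpace.compactSpace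
    have := separableSpace_of_setOf_continuous_subset hXT.dense_setOf_continuous hcont
    let F : (ℕ → Bool) → H := fun x =>
      ⟨_, hH (cantorFamily_mem_baireOneStable (y := y) hXT hψc hψ x)⟩
    have hF : Injective F := fun x x' h => cantorFamily_injective hψ hy (congrArg Subtype.val h)
    have hloc (z : H) : ∃ U ∈ 𝓝 z, (U ∩ range F).Subsingleton := by
      obtain ⟨W, hW, hWs⟩ := exists_mem_nhds_setOf_cantorFamily_mem_subsingleton hψ hy hyU z.1
      refine ⟨_, continuous_subtype_val.continuousAt.preimage_mem_nhds hW, ?_⟩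
      rintro _ ⟨ha, x, rfl⟩ _ ⟨hb, x', rfl⟩
      rw [hWs ha hb]
    have hlt := mk_lt_continuum_of_forall_subset_isClosed fun t ht =>
      isClosed_of_subset_of_forall_nhds_subsingleton hloc ht
    exact hlt.ne (by simpa using Cardinal.mk_range_eq_of_injective hF)
  · have : MetrizableSpace (X → Y) := by
      let := Encodable.ofCountable X
      infer_instance
    exact ⟨inferInstance, inferInstance⟩
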